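/- Let W_f, W_r ∈ ℝ^{n×m}, U_f, U_r ∈ ℝ^{n×n}, L_f ∈ ℝ^{n×p}, U_o ∈ ℝ^{p×n}, b_f, b_r ∈ ℝ^n, and x̌ ≥ 0. Define σ̌_f = σ(max_i (∑_j |(W_f)_{ij}| + x̌·∑_j |(U_f)_{ij}| + |(b_f)_i|)). For u ∈ ℝ^m with ‖u‖_∞ ≤ 1 and x, x̂ ∈ ℝ^n with ‖x‖_∞ ≤ x̌ and ‖x̂‖_∞ ≤ x̌, set f = σ(W_f u + U_f x + b_f), f̂ = σ(W_f u + U_f x̂ + b_f + L_f U_o (x − x̂)), r = tanh(W_r u + U_r (f ∘ x) + b_r), r̂ = tanh(W_r u + U_r (f̂ ∘ x̂) + b_r). Then ‖r − r̂‖_∞ ≤ ‖U_r‖_∞·((1/4)·x̌·‖U_f − L_f·U_o‖_∞ + σ̌_f)·‖x − x̂‖_∞. -/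

import Mathlib

open Matrix

/-- The logistic sigmoid. -/
noncomputable def sigmoid (s : ℝ) : ℝ := 1 / (1 + Real.exp (-s))

/-- ∞-norm on `Fin n → ℝ`. -/
noncomputable def normInf {n : ℕ} (v : Fin n → ℝ) : ℝ := ⨆ i, |v i|

/-- Induced ∞-norm of a matrix (maximum absolute row sum). -/
noncomputable def matNormInf {n m : ℕ} (A : Matrix (Fin n) (Fin m) ℝ) : ℝ :=
  ⨆ i, ∑ j, |A i j|

/-!
In the sup norm an entrywise K-Lipschitz map is K-Lipschitz and ‖A v‖ ≤ ‖A‖ ‖v‖ for the induced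
norm. σ is (1/4)-Lipschitz because σ' = σ(1 − σ) ≤ 1/4, hence tanh = 2σ(2·) − 1 is 1-Lipschitz.
The preactivations of f and f̂ differ by exactly (U_f − L_f U_o)(x − x̂), σ is increasing so
‖f‖ ≤ σ̌_f, and f x − f̂ x̂ = (f − f̂) x̂ + f (x − x̂) combines the two bounds.
-/

open scoped NNReal

attribute [local instance] Matrix.linftyOpNormedAddCommGroup

theorem sigmoid_eq_real_sigmoid : sigmoid = Real.sigmoid :=
  funext fun _ => one_div _

theorem lipschitzWith_sigmoid : LipschitzWith (1 / 4) sigmoid := by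
  rw [sigmoid_eq_real_sigmoid]
  refine lipschitzWith_of_nnnorm_deriv_le differentiable_sigmoid fun s => ?_
  have h0 : 0 ≤ Real.sigmoid s * (1 - Real.sigmoid s) :=
    mul_nonneg (Real.sigmoid_nonneg s) (sub_nonneg.2 (Real.sigmoid_le_one s))
  rw [Real.deriv_sigmoid, ← NNReal.coe_le_coe, coe_nnnorm, Real.norm_of_nonneg h0,
    NNReal.coe_div, NNReal.coe_one, NNReal.coe_ofNat]
  nlinarith [sq_nonneg (2 * Real.sigmoid s - 1)]

theorem tanh_eq_two_mul_sigmoid_sub_one (x : ℝ) :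
    Real.tanh x = 2 * sigmoid (2 * x) - 1 := by
  have := Real.exp_pos x
  rw [sigmoid, Real.tanh_eq_sinh_div_cosh, Real.sinh_eq, Real.cosh_eq,
    show -(2 * x) = -x + -x by ring, Real.exp_add, Real.exp_neg]
  field_simp
  ring

theorem lipschitzWith_tanh : LipschitzWith 1 Real.tanh := by
  refine LipschitzWith.of_dist_le_mul fun a b => ?_
  have h := lipschitzWith_sigmoid.dist_le_mul (2 * a) (2 * b)
  rw [Real.dist_eq, Real.dist_eq, ← mul_sub, abs_mul, abs_two] at h
  rw [Real.dist_eq, Real.dist_eq, tanh_eq_two_mul_sigmoid_sub_one, tanh_eq_two_mul_sigmoid_sub_one,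
    show ∀ s t : ℝ, 2 * s - 1 - (2 * t - 1) = 2 * (s - t) by intros; ring, abs_mul, abs_two]
  push_cast at h ⊢
  linarith

theorem pi_norm_eq_ciSup {ι : Type*} [Fintype ι] {β : ι → Type*}
    [∀ i, SeminormedAddCommGroup (β i)] (v : ∀ i, β i) : ‖v‖ = ⨆ i, ‖v i‖ :=
  le_antisymm
    ((pi_norm_le_iff_of_nonneg (Real.iSup_nonneg fun _ => norm_nonneg _)).2 fun i =>
      le_ciSup (f := fun i => ‖v i‖) (Set.finite_range _).bddAbove i)
    (Real.iSup_le (fun i => norm_le_pi_norm v i) (norm_nonneg _))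

theorem normInf_eq_norm {n : ℕ} (v : Fin n → ℝ) : normInf v = ‖v‖ := by
  simp only [normInf, pi_norm_eq_ciSup, Real.norm_eq_abs]

theorem matNormInf_eq_norm {n m : ℕ} (A : Matrix (Fin n) (Fin m) ℝ) : matNormInf A = ‖A‖ := by
  change _ = ‖fun i => WithLp.toLp 1 (A i)‖
  simp only [matNormInf, pi_norm_eq_ciSup, PiLp.norm_eq_of_L1, Real.norm_eq_abs]

theorem norm_comp_sub_comp_le {ι E F : Type*} [Fintype ι] [SeminormedAddCommGroup E]
    [SeminormedAddCommGroup F] {g : E → F} {K : ℝ≥0} (hg : LipschitzWith K g) (v w : ι → E) :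
    ‖g ∘ v - g ∘ w‖ ≤ K * ‖v - w‖ :=
  (pi_norm_le_iff_of_nonneg (by positivity)).2 fun i => by
    rw [Pi.sub_apply, Function.comp_apply, Function.comp_apply, ← dist_eq_norm]
    refine (hg.dist_le_mul (v i) (w i)).trans ?_
    rw [dist_eq_norm]
    gcongr
    exact norm_le_pi_norm (v - w) i

theorem norm_mul_sub_mul_le {R : Type*} [NonUnitalSeminormedRing R] (a b c d : R) :
    ‖a * b - c * d‖ ≤ ‖a - c‖ * ‖d‖ + ‖a‖ * ‖b - d‖ := by
  rw [show a * b - c * d = (a - c) * d + a * (b - d) by noncomm_ring]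
  exact (norm_add_le _ _).trans (add_le_add (norm_mul_le _ _) (norm_mul_le _ _))

theorem abs_mulVec_apply_le {ι κ : Type*} [Fintype κ] (A : Matrix ι κ ℝ) (v : κ → ℝ) (i : ι) :
    |(A *ᵥ v) i| ≤ (∑ j, |A i j|) * ‖v‖ :=
  calc |∑ j, A i j * v j| ≤ ∑ j, |A i j * v j| := Finset.abs_sum_le_sum_abs _ _
    _ ≤ ∑ j, |A i j| * ‖v‖ := by
        gcongr with j; rw [abs_mul]; gcongr; exact norm_le_pi_norm v j
    _ = (∑ j, |A i j|) * ‖v‖ := (Finset.sum_mul ..).symm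

theorem mulVec_add_mulVec_add_apply_le {ι κ ν : Type*} [Fintype κ] [Fintype ν] (A : Matrix ι κ ℝ)
    (B : Matrix ι ν ℝ) (b : ι → ℝ) {u : κ → ℝ} {x : ν → ℝ} {c : ℝ} (hu : ‖u‖ ≤ 1)
    (hx : ‖x‖ ≤ c) (i : ι) :
    (A *ᵥ u + B *ᵥ x + b) i ≤ ∑ j, |A i j| + c * ∑ j, |B i j| + |b i| := by
  have hAu := (le_abs_self _).trans (abs_mulVec_apply_le A u i)
  have hBx := (le_abs_self _).trans (abs_mulVec_apply_le B x i)
  have hA : (∑ j, |A i j|) * ‖u‖ ≤ ∑ j, |A i j| :=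
    mul_le_of_le_one_right (Finset.sum_nonneg fun j _ => abs_nonneg (A i j)) hu
  have hB : (∑ j, |B i j|) * ‖x‖ ≤ (∑ j, |B i j|) * c :=
    mul_le_mul_of_nonneg_left hx (Finset.sum_nonneg fun j _ => abs_nonneg (B i j))
  simp only [Pi.add_apply]
  linarith [le_abs_self (b i)]

theorem norm_sigmoid_comp_le {ι : Type*} [Fintype ι] {z c : ι → ℝ} (h : ∀ i, z i ≤ c i) :
    ‖sigmoid ∘ z‖ ≤ sigmoid (⨆ i, c i) := by
  rw [sigmoid_eq_real_sigmoid]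
  refine (pi_norm_le_iff_of_nonneg (Real.sigmoid_nonneg _)).2 fun i => ?_
  rw [Function.comp_apply, Real.norm_of_nonneg (Real.sigmoid_nonneg _)]
  exact Real.sigmoid_le ((h i).trans (le_ciSup (Set.finite_range c).bddAbove i))

theorem stmt_11_general {n m p : ℕ}
    (Wf Wr : Matrix (Fin n) (Fin m) ℝ) (Uf Ur : Matrix (Fin n) (Fin n) ℝ)
    (Lf : Matrix (Fin n) (Fin p) ℝ) (Uo : Matrix (Fin p) (Fin n) ℝ)
    (bf br : Fin n → ℝ) (xcheck : ℝ)
    (u : Fin m → ℝ) (hu : normInf u ≤ 1)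
    (x xhat : Fin n → ℝ) (hxb : normInf x ≤ xcheck) (hxhatb : normInf xhat ≤ xcheck) :
    let sigf : ℝ := sigmoid (⨆ i, (∑ jj, |Wf i jj| + xcheck * ∑ jj, |Uf i jj| + |bf i|))
    let f : Fin n → ℝ := fun j => sigmoid ((Wf.mulVec u + Uf.mulVec x + bf) j)
    let fhat : Fin n → ℝ := fun j =>
      sigmoid ((Wf.mulVec u + Uf.mulVec xhat + bf + Lf.mulVec (Uo.mulVec (x - xhat))) j)
    let r : Fin n → ℝ := fun j =>
      Real.tanh ((Wr.mulVec u + Ur.mulVec (fun i => f i * x i) + br) j)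
    let rhat : Fin n → ℝ := fun j =>
      Real.tanh ((Wr.mulVec u + Ur.mulVec (fun i => fhat i * xhat i) + br) j)
    normInf (r - rhat) ≤
      matNormInf Ur * ((1 / 4) * xcheck * matNormInf (Uf - Lf * Uo) + sigf) *
        normInf (x - xhat) := by
  intro sigf f fhat r rhat
  simp only [normInf_eq_norm, matNormInf_eq_norm] at hu hxb hxhatb ⊢
  have hf : ‖f‖ ≤ sigf := norm_sigmoid_comp_le (mulVec_add_mulVec_add_apply_le Wf Uf bf hu hxb)
  have hf_sub : ‖f - fhat‖ ≤ 1 / 4 * (‖Uf - Lf * Uo‖ * ‖x - xhat‖) := by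
    have hpre : (Wf *ᵥ u + Uf *ᵥ x + bf) - (Wf *ᵥ u + Uf *ᵥ xhat + bf + Lf *ᵥ (Uo *ᵥ (x - xhat)))
        = (Uf - Lf * Uo) *ᵥ (x - xhat) := by
      simp only [sub_mulVec, mulVec_sub, ← mulVec_mulVec]; abel
    calc ‖f - fhat‖
        ≤ (1 / 4 : ℝ≥0) * ‖(Wf *ᵥ u + Uf *ᵥ x + bf)
            - (Wf *ᵥ u + Uf *ᵥ xhat + bf + Lf *ᵥ (Uo *ᵥ (x - xhat)))‖ :=
          norm_comp_sub_comp_le lipschitzWith_sigmoid _ _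
      _ ≤ _ := by rw [hpre]; push_cast; gcongr; exact linfty_opNorm_mulVec ..
  have hfx_sub : ‖f * x - fhat * xhat‖ ≤
      (1 / 4 * xcheck * ‖Uf - Lf * Uo‖ + sigf) * ‖x - xhat‖ :=
    calc ‖f * x - fhat * xhat‖ ≤ ‖f - fhat‖ * ‖xhat‖ + ‖f‖ * ‖x - xhat‖ := norm_mul_sub_mul_le ..
      _ ≤ 1 / 4 * (‖Uf - Lf * Uo‖ * ‖x - xhat‖) * xcheck + sigf * ‖x - xhat‖ := by gcongr
      _ = _ := by ring
  calc ‖r - rhat‖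
      ≤ 1 * ‖(Wr *ᵥ u + Ur *ᵥ (f * x) + br) - (Wr *ᵥ u + Ur *ᵥ (fhat * xhat) + br)‖ :=
        norm_comp_sub_comp_le lipschitzWith_tanh _ _
    _ = ‖Ur *ᵥ (f * x - fhat * xhat)‖ := by rw [one_mul, mulVec_sub]; abel_nf
    _ ≤ ‖Ur‖ * ‖f * x - fhat * xhat‖ := linfty_opNorm_mulVec ..
    _ ≤ _ := by rw [mul_assoc]; gcongr

/-- squashed-input difference bound between a GRU and its
Luenberger-like observer. -/
theorem stmt_11 {n m p : ℕ}
    (Wf Wr : Matrix (Fin n) (Fin m) ℝ) (Uf Ur : Matrix (Fin n) (Fin n) ℝ)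
    (Lf : Matrix (Fin n) (Fin p) ℝ) (Uo : Matrix (Fin p) (Fin n) ℝ)
    (bf br : Fin n → ℝ) (xcheck : ℝ) (hx : 0 ≤ xcheck)
    (u : Fin m → ℝ) (hu : normInf u ≤ 1)
    (x xhat : Fin n → ℝ) (hxb : normInf x ≤ xcheck) (hxhatb : normInf xhat ≤ xcheck) :
    let sigf : ℝ := sigmoid (⨆ i, (∑ jj, |Wf i jj| + xcheck * ∑ jj, |Uf i jj| + |bf i|))
    let f : Fin n → ℝ := fun j => sigmoid ((Wf.mulVec u + Uf.mulVec x + bf) j)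
    let fhat : Fin n → ℝ := fun j =>
      sigmoid ((Wf.mulVec u + Uf.mulVec xhat + bf + Lf.mulVec (Uo.mulVec (x - xhat))) j)
    let r : Fin n → ℝ := fun j =>
      Real.tanh ((Wr.mulVec u + Ur.mulVec (fun i => f i * x i) + br) j)
    let rhat : Fin n → ℝ := fun j =>
      Real.tanh ((Wr.mulVec u + Ur.mulVec (fun i => fhat i * xhat i) + br) j)
    normInf (r - rhat) ≤
      matNormInf Ur * ((1 / 4) * xcheck * matNormInf (Uf - Lf * Uo) + sigf) *
        normInf (x - xhat) :=
  stmt_11_general Wf Wr Uf Ur Lf Uo bf br xcheck u hu x xhat hxb hxhatb
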